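/- Let n ≥ 1, let Δ = {−n,…,n}² ⊂ ℤ², and let x, y ∈ ℤ² \ Δ. Suppose P is a *path from x to y avoiding Δ with winding number W(P) < 0 (a clockwise *path in Δᶜ) and Q is a *path from x to y avoiding Δ with winding number W(Q) > 0 (a counterclockwise *path in Δᶜ). Then there exists a *circuit around Δ all of whose sites belong to P ∪ Q. -/

import Mathlib

open MeasureTheory ProbabilityTheory
open scoped ENNReal

namespace Percolation

/-- Sites of the square lattice. -/
abbrev Site : Type := ℤ × ℤ

/-- Configurations: spins `0`/`1` encoded as `false`/`true`. -/
abbrev Config : Type := Site → Bool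

/-- Nearest-neighbour adjacency: Euclidean distance `1`. -/
def adj (x y : Site) : Prop :=
  (x.1 - y.1) ^ 2 + (x.2 - y.2) ^ 2 = 1

/-- `*`adjacency: Euclidean distance `1` or `√2`. -/
def adjStar (x y : Site) : Prop :=
  x ≠ y ∧ |x.1 - y.1| ≤ 1 ∧ |x.2 - y.2| ≤ 1

/-- `x` and `y` are joined inside `G` by a path whose consecutive sites satisfy `R`. -/
def JoinedIn (R : Site → Site → Prop) (G : Set Site) (x y : Site) : Prop :=
  ∃ P : List Site, P.Chain' R ∧ (∀ z ∈ P, z ∈ G) ∧ P.head? = some x ∧ P.getLast? = some y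

/-- `S` is a `0`cluster of `σ`: a maximal `adj`-connected subset of `σ⁻¹(0)`. -/
def IsCluster0 (σ : Config) (S : Set Site) : Prop :=
  S.Nonempty ∧ (∀ z ∈ S, σ z = false) ∧
    (∀ x ∈ S, ∀ y ∈ S, JoinedIn adj S x y) ∧
    (∀ x ∈ S, ∀ y : Site, adj x y → σ y = false → y ∈ S)

/-- `S` is a `1*`cluster of `σ`: a maximal `adjStar`-connected subset of `σ⁻¹(1)`. -/
def IsCluster1 (σ : Config) (S : Set Site) : Prop :=
  S.Nonempty ∧ (∀ z ∈ S, σ z = true) ∧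
    (∀ x ∈ S, ∀ y ∈ S, JoinedIn adjStar S x y) ∧
    (∀ x ∈ S, ∀ y : Site, adjStar x y → σ y = true → y ∈ S)

/-- `x` belongs to an infinite `1*`cluster of `σ`. -/
def InInfinite1 (σ : Config) (x : Site) : Prop :=
  ∃ S : Set Site, IsCluster1 σ S ∧ S.Infinite ∧ x ∈ S

/-- There is exactly one infinite `0`cluster. -/
def UniqueInfinite0 (σ : Config) : Prop :=
  ∃! S : Set Site, IsCluster0 σ S ∧ S.Infinite

/-- There is exactly one infinite `1*`cluster. -/
def UniqueInfinite1 (σ : Config) : Prop :=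
  ∃! S : Set Site, IsCluster1 σ S ∧ S.Infinite

/-- There is at most one infinite `1*`cluster. -/
def AtMostOneInfinite1 (σ : Config) : Prop :=
  ∀ S T : Set Site, IsCluster1 σ S → S.Infinite → IsCluster1 σ T → T.Infinite → S = T

/-- An infinite `1*`cluster exists. -/
def ExistsInfinite1 (σ : Config) : Prop := ∃ S : Set Site, IsCluster1 σ S ∧ S.Infinite

/-- An infinite `0`cluster exists. -/
def ExistsInfinite0 (σ : Config) : Prop := ∃ S : Set Site, IsCluster0 σ S ∧ S.Infinite

/-- An increasing event. -/
def IncreasingEvent (A : Set Config) : Prop :=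
  ∀ ⦃ξ η : Config⦄, ξ ∈ A → ξ ≤ η → η ∈ A

/-- Positive association: increasing events are positively correlated. -/
def PositivelyAssociated (μ : Measure Config) : Prop :=
  ∀ A B : Set Config, MeasurableSet A → MeasurableSet B →
    IncreasingEvent A → IncreasingEvent B → μ A * μ B ≤ μ (A ∩ B)

/-- The cylinder event "`η` on `Δ`". -/
def cylEvent (Δ : Finset Site) (η : Site → Bool) : Set Config :=
  {σ | ∀ z ∈ Δ, σ z = η z}

/-- The σ-algebra generated by the spins outside `Δ`. -/
def outsideAlgebra (Δ : Finset Site) : MeasurableSpace Config :=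
  MeasurableSpace.comap (fun σ (z : {z : Site // z ∉ Δ}) => σ z.1) inferInstance

/-- The bounded energy condition: `μ(η on Δ | ξ off Δ) ≥ c_{|Δ|}` for a.e. `ξ`, expressed
via integrated conditional probabilities against events of the outside σ-algebra. -/
def BoundedEnergy (μ : Measure Config) : Prop :=
  ∀ n : ℕ, ∃ c : ℝ≥0∞, 0 < c ∧
    ∀ Δ : Finset Site, Δ.card = n → ∀ η : Site → Bool,
      ∀ B : Set Config, MeasurableSet[outsideAlgebra Δ] B →
        c * μ B ≤ μ (cylEvent Δ η ∩ B)

/-- The finite energy condition: `μ(η on Δ | ξ off Δ) > 0` for a.e. `ξ`, expressed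
via integrated conditional probabilities against events of the outside σ-algebra. -/
def FiniteEnergy (μ : Measure Config) : Prop :=
  ∀ (Δ : Finset Site) (η : Site → Bool) (B : Set Config),
    MeasurableSet[outsideAlgebra Δ] B → 0 < μ B → 0 < μ (cylEvent Δ η ∩ B)

/-- The tail σ-algebra. -/
def tailAlgebra : MeasurableSpace Config :=
  ⨅ Δ : Finset Site, outsideAlgebra Δ

/-- Translation of configurations by `v`. -/
def shift (v : Site) (σ : Config) : Config := fun z => σ (z + v)

/-- A site viewed as a complex number. -/
noncomputable def toC (z : Site) : ℂ := (z.1 : ℂ) + (z.2 : ℂ) * Complex.I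

/-- Winding number around the origin of the polygonal curve through the sites of `P`. -/
noncomputable def winding (P : List Site) : ℝ :=
  (1 / (2 * Real.pi)) *
    ((P.zip P.tail).map fun p => Complex.arg (toC p.2 / toC p.1)).sum

/-- Winding number of `P` around the site `w`. -/
noncomputable def windingAround (P : List Site) (w : Site) : ℝ :=
  winding (P.map fun z => z - w)

/-- The site `w` lies in the interior of the circuit `C`, i.e. is enclosed by `C`. -/
def circuitEncloses (C : List Site) (w : Site) : Prop :=
  w ∉ C ∧ windingAround (C ++ C.take 1) w ≠ 0

/-- A circuit: a path whose starting site is adjacent to its ending site. -/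
def IsCircuit (C : List Site) : Prop :=
  C.Chain' adj ∧ ∃ h : C ≠ [], adj (C.getLast h) (C.head h)

/-- A `*`circuit: a `*`path whose starting site is `*`adjacent to its ending site. -/
def IsStarCircuit (C : List Site) : Prop :=
  C.Chain' adjStar ∧ ∃ h : C ≠ [], adjStar (C.getLast h) (C.head h)

/-- A (finite) `1*`path with respect to `σ`. -/
def Is1StarPath (σ : Config) (P : List Site) : Prop :=
  P ≠ [] ∧ P.Chain' adjStar ∧ ∀ z ∈ P, σ z = true

/-- A (finite) `0`path with respect to `σ`. -/
def Is0Path (σ : Config) (P : List Site) : Prop :=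
  P ≠ [] ∧ P.Chain' adj ∧ ∀ z ∈ P, σ z = false

/-- A `1*`circuit with respect to `σ`. -/
def Is1StarCircuit (σ : Config) (C : List Site) : Prop :=
  IsStarCircuit C ∧ ∀ z ∈ C, σ z = true

/-- A `0`circuit with respect to `σ`. -/
def Is0Circuit (σ : Config) (C : List Site) : Prop :=
  IsCircuit C ∧ ∀ z ∈ C, σ z = false

/-- `C` is a circuit around `Δ`: every site of `Δ` is enclosed by `C`. -/
def CircuitAround (C : List Site) (Δ : Set Site) : Prop :=
  ∀ z ∈ Δ, circuitEncloses C z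

/-- A mixed circuit with respect to `σ`: a self-avoiding `*`circuit consisting of a
self-avoiding `1*`path followed by a self-avoiding `0`path (either part may be empty). -/
def IsMixedCircuit (σ : Config) (C : List Site) : Prop :=
  ∃ P Q : List Site, C = P ++ Q ∧ C.Nodup ∧
    P.Chain' adjStar ∧ Q.Chain' adj ∧
    (∀ z ∈ P, σ z = true) ∧ (∀ z ∈ Q, σ z = false) ∧ IsStarCircuit C

/-- `z` lies in the exterior of the circuit `C`. -/
def InExterior (C : List Site) (z : Site) : Prop :=
  z ∉ C ∧ ¬ circuitEncloses C z

/-- An infinite self-avoiding `1*`path with respect to `σ`. -/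
def IsInfSA1StarPath (σ : Config) (f : ℕ → Site) : Prop :=
  Function.Injective f ∧ (∀ i, adjStar (f i) (f (i + 1))) ∧ ∀ i, σ (f i) = true

/-- An infinite self-avoiding `0`path with respect to `σ`. -/
def IsInfSA0Path (σ : Config) (f : ℕ → Site) : Prop :=
  Function.Injective f ∧ (∀ i, adj (f i) (f (i + 1))) ∧ ∀ i, σ (f i) = false

/-- There exist `n` pairwise disjoint infinite self-avoiding `1*`paths. -/
def HasNDisjoint1 (σ : Config) (n : ℕ) : Prop :=
  ∃ f : Fin n → ℕ → Site, (∀ i, IsInfSA1StarPath σ (f i)) ∧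
    ∀ i j, i ≠ j → Disjoint (Set.range (f i)) (Set.range (f j))

/-- A two-sided infinite self-avoiding `1*`path with respect to `σ`. -/
def IsTwoSidedInf1 (σ : Config) (f : ℤ → Site) : Prop :=
  Function.Injective f ∧ (∀ i : ℤ, adjStar (f i) (f (i + 1))) ∧ ∀ i : ℤ, σ (f i) = true

/-- A `1*`path of `σ` from `x` to `y` avoiding `Δ`. -/
def starPathBetweenAvoiding (σ : Config) (Δ : Set Site) (x y : Site) (P : List Site) : Prop :=
  Is1StarPath σ P ∧ P.head? = some x ∧ P.getLast? = some y ∧ ∀ z ∈ P, z ∉ Δ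

/-- `x` is on the left side of `Γ`. -/
def OnLeftSide (x : Site) (Γ : Set Site) : Prop :=
  ∃ d : ℕ, 0 < d ∧ (∀ z ∈ Γ, |z.1| ≤ (d : ℤ) ∧ |z.2| ≤ (d : ℤ)) ∧ x.1 ≤ -(d : ℤ)

/-- `x` is on the right side of `Γ`. -/
def OnRightSide (x : Site) (Γ : Set Site) : Prop :=
  ∃ d : ℕ, 0 < d ∧ (∀ z ∈ Γ, |z.1| ≤ (d : ℤ) ∧ |z.2| ≤ (d : ℤ)) ∧ (d : ℤ) ≤ x.1

/-- The square `{-n, …, n}²`. -/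
def square (n : ℕ) : Set Site := {z : Site | |z.1| ≤ (n : ℤ) ∧ |z.2| ≤ (n : ℤ)}

/-- The `*`boundary `∂*B` of a set of sites. -/
def starBoundary (B : Set Site) : Set Site :=
  {x | x ∉ B ∧ ∃ y ∈ B, adjStar x y}

/-- The union of all infinite `1*`clusters of `σ`. -/
def InfinitePart1 (σ : Config) : Set Site := {z | InInfinite1 σ z}

/-- The filled infinite `1*`cluster `S₁*`: the infinite `1*`cluster together with all
finite `0`clusters `*`encircled by it. -/
def Fill (σ : Config) : Set Site :=
  InfinitePart1 σ ∪
    {z | ∃ F : Set Site, IsCluster0 σ F ∧ F.Finite ∧ z ∈ F ∧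
      ∃ C : List Site, IsStarCircuit C ∧ (∀ w ∈ C, w ∈ InfinitePart1 σ) ∧
        ∀ w ∈ F, circuitEncloses C w}

/-- The indicator of the filled infinite `1*`cluster, as a point of `{0,1}^{ℤ²}`. -/
noncomputable def fillInd (σ : Config) : Site → Bool :=
  fun z => @decide (z ∈ Fill σ) (Classical.propDecidable _)

/-- Exactly one infinite `0`cluster and exactly one infinite `1*`cluster coexist. -/
def CoexistUnique (σ : Config) : Prop := UniqueInfinite0 σ ∧ UniqueInfinite1 σ

/-!
Following `P` and then `Q` backwards gives a closed `*`path whose winding number around the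
origin is `W(P) - W(Q) < 0`: reversing a step negates its change of argument because no step
passes through the origin. A step between `*`adjacent sites outside `Δ` misses the whole real
square `[-n, n]²`, so around a point `w` of that square the winding number of the closed path is
continuous in `w`; being an integer, it is the same around every site of `Δ` as around the origin.
Dropping the repeated endpoint `x` leaves the required `*`circuit.
-/

open Complex Real

theorem _root_.List.IsChain.append_tail {α : Type*} {R : α → α → Prop} {A B : List α}
    (hA : A.IsChain R) (hB : B.IsChain R) (h : A.getLast? = B.head?) :
    (A ++ B.tail).IsChain R := by
  obtain _ | ⟨b, B⟩ := B
  · simpa using hA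
  · refine hA.append hB.tail fun a ha c hc => ?_
    obtain rfl : b = a := by simpa [h] using ha
    exact List.isChain_cons.1 hB |>.1 c hc

noncomputable def argSum : List ℂ → ℝ
  | [] => 0
  | [_] => 0
  | a :: b :: L => arg (b / a) + argSum (b :: L)

@[simp] lemma argSum_nil : argSum [] = 0 := rfl

@[simp] lemma argSum_singleton (a : ℂ) : argSum [a] = 0 := rfl

lemma argSum_cons_cons (a b : ℂ) (L : List ℂ) :
    argSum (a :: b :: L) = arg (b / a) + argSum (b :: L) := rfl

lemma argSum_append_tail : ∀ {A B : List ℂ}, A.getLast? = B.head? →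
    argSum (A ++ B.tail) = argSum A + argSum B
  | [], [], _ => by simp
  | [a], B, h => by
    obtain ⟨B, rfl⟩ := List.head?_eq_some_iff.1 (by simpa using h.symm)
    simp
  | a :: a' :: A, B, h => by
    rw [List.cons_append, List.cons_append, argSum_cons_cons, argSum_cons_cons,
      ← List.cons_append, argSum_append_tail (by simpa using h), add_assoc]

lemma argSum_reverse : ∀ {L : List ℂ}, L.IsChain (fun a b => b / a ∈ slitPlane) →
    argSum L.reverse = -argSum L
  | [], _ => by simp
  | [_], _ => by simp
  | a :: b :: L, h => by
    obtain ⟨hab, hL⟩ := List.isChain_cons_cons.1 h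
    have hrev : (a :: b :: L).reverse = (b :: L).reverse ++ [b, a].tail := by simp
    rw [hrev, argSum_append_tail (by simp), argSum_reverse hL, argSum_cons_cons,
      argSum_cons_cons, argSum_singleton, ← inv_div, arg_inv, if_neg (slitPlane_arg_ne_pi hab)]
    ring

lemma coe_argSum_cons : ∀ (a : ℂ) (L : List ℂ), (∀ z ∈ a :: L, z ≠ 0) →
    (argSum (a :: L) : Real.Angle) = arg ((a :: L).getLast (List.cons_ne_nil a L) / a)
  | a, [], h => by simp [div_self (h a List.mem_cons_self)]
  | a, b :: L, h => by
    have ha := h a List.mem_cons_self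
    have hb := h b (by simp)
    have hlast := h _ (List.getLast_mem (List.cons_ne_nil a (b :: L)))
    rw [argSum_cons_cons, Real.Angle.coe_add,
      coe_argSum_cons b L (fun z hz => h z (by simp [hz])), List.getLast_cons_cons,
      ← arg_mul_coe_angle (div_ne_zero hb ha) (div_ne_zero (by simpa using hlast) hb), mul_comm,
      div_mul_div_cancel₀ hb]

lemma argSum_mem_zmultiples {L : List ℂ} (hL : L.head? = L.getLast?) (h : ∀ z ∈ L, z ≠ 0) :
    argSum L ∈ AddSubgroup.zmultiples (2 * π) := by
  obtain _ | ⟨a, L⟩ := L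
  · exact zero_mem _
  · have hlast : (a :: L).getLast (List.cons_ne_nil a L) = a := by
      simpa [List.getLast?_eq_some_getLast] using hL.symm
    rw [AddSubgroup.mem_zmultiples_iff, ← Real.Angle.coe_eq_zero_iff, coe_argSum_cons a L h,
      hlast, div_self (h a List.mem_cons_self), arg_one, Real.Angle.coe_zero]

lemma continuousOn_argSum_map_sub {S : Set ℂ} : ∀ {L : List ℂ},
    (∀ w ∈ S, L.IsChain fun a b => (b - w) / (a - w) ∈ slitPlane) →
    ContinuousOn (fun w => argSum (L.map (· - w))) S
  | [], _ => by simpa using continuousOn_const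
  | [_], _ => by simpa using continuousOn_const
  | a :: b :: L, h => by
    simp only [List.map_cons, argSum_cons_cons]
    refine .add (fun w hw => ?_) (continuousOn_argSum_map_sub fun w hw => (h w hw).tail)
    have hslit := (List.isChain_cons_cons.1 (h w hw)).1
    have ha : a - w ≠ 0 := fun h0 => by simp [h0] at hslit
    have hratio : ContinuousAt (fun w => (b - w) / (a - w)) w := by fun_prop (disch := exact ha)
    exact (ContinuousAt.comp (g := arg) (f := fun w => (b - w) / (a - w))
      (continuousAt_arg hslit) hratio).continuousWithinAt

lemma argSum_map_sub_eq {L : List ℂ} (hL : L.head? = L.getLast?) {S : Set ℂ}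
    (hS : IsPreconnected S) (hLS : ∀ w ∈ S, w ∉ L)
    (hslit : ∀ w ∈ S, L.IsChain fun a b => (b - w) / (a - w) ∈ slitPlane)
    {w₁ w₂ : ℂ} (h₁ : w₁ ∈ S) (h₂ : w₂ ∈ S) :
    argSum (L.map (· - w₁)) = argSum (L.map (· - w₂)) :=
  hS.constant_of_mapsTo (isDiscrete_iff_discreteTopology.2
    (inferInstanceAs (DiscreteTopology (AddSubgroup.zmultiples (2 * π)))))
    (continuousOn_argSum_map_sub hslit)
    (fun w hw => argSum_mem_zmultiples (by simp [List.head?_map, List.getLast?_map, hL])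
      (by simpa [sub_eq_zero] using fun z hz (hzw : z = w) => hLS w hw (hzw ▸ hz))) h₁ h₂

lemma eq_zero_of_sub_eq_mul_sub {N s t u r : ℝ} (hs : N + 1 ≤ |s|) (hst : |s - t| ≤ 1)
    (hu : |u| ≤ N) (hr : r ≤ 0) (h : t - u = r * (s - u)) : r = 0 := by
  rw [abs_le] at hst hu
  rcases le_abs'.1 hs with hs | hs <;> nlinarith

lemma adjStar_symm {a b : Site} (h : adjStar a b) : adjStar b a :=
  ⟨h.1.symm, abs_sub_comm a.1 b.1 ▸ h.2.1, abs_sub_comm a.2 b.2 ▸ h.2.2⟩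

def realSquare (n : ℕ) : Set ℂ := Set.Icc (-(n : ℝ)) n ×ℂ Set.Icc (-(n : ℝ)) n

@[simp] lemma toC_re (z : Site) : (toC z).re = z.1 := by simp [toC]

@[simp] lemma toC_im (z : Site) : (toC z).im = z.2 := by simp [toC]

lemma toC_sub (z w : Site) : toC (z - w) = toC z - toC w := by
  simp only [toC, Prod.fst_sub, Prod.snd_sub, Int.cast_sub]
  ring

lemma toC_mem_realSquare_iff {n : ℕ} {z : Site} : toC z ∈ realSquare n ↔ z ∈ square n := by
  simp only [realSquare, square, mem_reProdIm, Set.mem_Icc, Set.mem_setOf_eq, toC_re, toC_im,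
    abs_le]
  norm_cast

lemma zero_mem_realSquare (n : ℕ) : (0 : ℂ) ∈ realSquare n := by
  simp [realSquare, mem_reProdIm]

lemma convex_realSquare (n : ℕ) : Convex ℝ (realSquare n) := by
  rw [realSquare, ← (convex_Icc (𝕜 := ℝ) _ _).convexHull_eq, ← convexHull_reProdIm]
  exact convex_convexHull ℝ _

/-- The segment joining two `*`adjacent sites outside `square n` misses `realSquare n`, so seen
from a point of `realSquare n` the step between them turns by an angle in `(-π, π)`. -/
lemma div_sub_mem_slitPlane {n : ℕ} {a b : Site} (ha : a ∉ square n) (hb : b ∉ square n)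
    (hab : adjStar a b) {w : ℂ} (hw : w ∈ realSquare n) :
    (toC b - w) / (toC a - w) ∈ slitPlane := by
  have haw : toC a - w ≠ 0 := sub_ne_zero.2 fun h => ha (toC_mem_realSquare_iff.1 (h ▸ hw))
  rw [mem_slitPlane_iff_not_le_zero, Complex.le_def]
  rintro ⟨hre, him⟩
  set r := ((toC b - w) / (toC a - w)).re
  have hr : toC b - w = r * (toC a - w) := by
    rw [← div_mul_cancel₀ (toC b - w) haw]
    congr 1
    exact Complex.ext (by simp [r]) (by simpa using him)
  have hre' : (b.1 : ℝ) - w.re = r * (a.1 - w.re) := by simpa using congrArg Complex.re hr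
  have him' : (b.2 : ℝ) - w.im = r * (a.2 - w.im) := by simpa using congrArg Complex.im hr
  have hr0 : r = 0 := by
    simp only [square, Set.mem_setOf_eq, not_and_or, not_le] at ha
    have h1 : |(a.1 : ℝ) - b.1| ≤ 1 := by exact_mod_cast hab.2.1
    have h2 : |(a.2 : ℝ) - b.2| ≤ 1 := by exact_mod_cast hab.2.2
    rcases ha with ha | ha
    · exact eq_zero_of_sub_eq_mul_sub (by exact_mod_cast ha) h1
        (abs_le.2 (mem_reProdIm.1 hw).1) (by simpa using hre) hre'
    · exact eq_zero_of_sub_eq_mul_sub (by exact_mod_cast ha) h2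
        (abs_le.2 (mem_reProdIm.1 hw).2) (by simpa using hre) him'
  rw [hr0, ofReal_zero, zero_mul, sub_eq_zero] at hr
  exact hb (toC_mem_realSquare_iff.1 (hr ▸ hw))

lemma argSum_map_toC : ∀ P : List Site,
    argSum (P.map toC) = ((P.zip P.tail).map fun p => arg (toC p.2 / toC p.1)).sum
  | [] => rfl
  | [_] => rfl
  | a :: b :: P => by
    rw [List.map_cons, List.map_cons, argSum_cons_cons, ← List.map_cons, argSum_map_toC (b :: P)]
    rfl

lemma winding_eq_argSum (P : List Site) : winding P = argSum (P.map toC) / (2 * π) := by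
  rw [winding, argSum_map_toC, one_div_mul_eq_div]

lemma windingAround_eq_argSum (P : List Site) (w : Site) :
    windingAround P w = argSum (P.map fun z => toC z - toC w) / (2 * π) := by
  simp only [windingAround, winding_eq_argSum, List.map_map, Function.comp_def, toC_sub]

lemma isChain_div_sub_mem_slitPlane {n : ℕ} {P : List Site} (hP : P.IsChain adjStar)
    (hPn : ∀ z ∈ P, z ∉ square n) {w : ℂ} (hw : w ∈ realSquare n) :
    (P.map toC).IsChain fun a b => (b - w) / (a - w) ∈ slitPlane :=
  List.isChain_map _ |>.2 <| hP.imp_of_mem_imp fun _ _ ha hb hab =>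
    div_sub_mem_slitPlane (hPn _ ha) (hPn _ hb) hab hw

lemma winding_append_reverse_tail {n : ℕ} {P Q : List Site} (hQ : Q.IsChain adjStar)
    (hQn : ∀ z ∈ Q, z ∉ square n) (hPQ : P.getLast? = Q.getLast?) :
    winding (P ++ Q.reverse.tail) = winding P - winding Q := by
  have hslit := isChain_div_sub_mem_slitPlane hQ hQn (zero_mem_realSquare n)
  simp only [sub_zero] at hslit
  simp only [winding_eq_argSum, List.map_append, List.map_tail, List.map_reverse]
  rw [argSum_append_tail (by simp [List.head?_reverse, List.getLast?_map, hPQ]),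
    argSum_reverse hslit]
  ring

lemma windingAround_eq_winding {n : ℕ} {C : List Site} (hC : (C ++ C.take 1).IsChain adjStar)
    (hCn : ∀ z ∈ C, z ∉ square n) {w : Site} (hw : w ∈ square n) :
    windingAround (C ++ C.take 1) w = winding (C ++ C.take 1) := by
  have hCn' : ∀ z ∈ C ++ C.take 1, z ∉ square n := by
    intro z hz
    rcases List.mem_append.1 hz with hz | hz
    exacts [hCn z hz, hCn z (List.mem_of_mem_take hz)]
  have hclosed : (C ++ C.take 1).head? = (C ++ C.take 1).getLast? := by
    cases C with
    | nil => rfl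
    | cons a C => exact (List.getLast?_concat (l := a :: C)).symm
  rw [windingAround_eq_argSum, winding_eq_argSum]
  congr 1
  simpa [List.map_map, Function.comp_def] using
    argSum_map_sub_eq (L := (C ++ C.take 1).map toC)
      (by rw [List.head?_map, List.getLast?_map, hclosed]) (convex_realSquare n).isPreconnected
      (fun v hv hvC => by
        obtain ⟨z, hz, rfl⟩ := List.mem_map.1 hvC
        exact hCn' z hz (toC_mem_realSquare_iff.1 hv))
      (fun v hv => isChain_div_sub_mem_slitPlane hC hCn' hv)
      (toC_mem_realSquare_iff.2 hw) (zero_mem_realSquare n)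

lemma isStarCircuit_of_isChain_append_take_one {C : List Site} (hC : C ≠ [])
    (h : (C ++ C.take 1).IsChain adjStar) : IsStarCircuit C := by
  obtain ⟨a, C, rfl⟩ := List.exists_cons_of_ne_nil hC
  refine ⟨h.left_of_append, hC, ?_⟩
  simpa [List.getLast?_eq_some_getLast hC] using (List.isChain_append.1 h).2.2

theorem statement6_general (n : ℕ) (x y : Site)
    (P : List Site) (hPc : P.Chain' adjStar) (hPh : P.head? = some x)
    (hPl : P.getLast? = some y) (hPavoid : ∀ z ∈ P, z ∉ square n)
    (hPw : winding P < 0)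
    (Q : List Site) (hQc : Q.Chain' adjStar) (hQh : Q.head? = some x)
    (hQl : Q.getLast? = some y) (hQavoid : ∀ z ∈ Q, z ∉ square n)
    (hQw : 0 < winding Q) :
    ∃ C : List Site, IsStarCircuit C ∧ CircuitAround C (square n) ∧
      ∀ z ∈ C, z ∈ P ∨ z ∈ Q := by
  obtain ⟨P, rfl⟩ := List.head?_eq_some_iff.1 hPh
  obtain ⟨Q, rfl⟩ := List.head?_eq_some_iff.1 hQh
  have hQ : Q ≠ [] := by rintro rfl; simp [winding] at hQw
  set C := (x :: P) ++ Q.reverse.tail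
  have hloop : C ++ C.take 1 = (x :: P) ++ (x :: Q).reverse.tail := by
    simp [C, List.tail_append_of_ne_nil (List.reverse_ne_nil_iff.2 hQ)]
  have hchain : (C ++ C.take 1).IsChain adjStar :=
    hloop ▸ hPc.append_tail (List.isChain_reverse.2 (hQc.imp fun _ _ => adjStar_symm))
      (by rw [hPl, List.head?_reverse, hQl])
  have hCPQ : ∀ z ∈ C, z ∈ x :: P ∨ z ∈ x :: Q := fun z hz =>
    (List.mem_append.1 hz).imp id fun hz =>
      List.mem_cons_of_mem x (List.mem_reverse.1 (List.mem_of_mem_tail hz))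
  have hCn : ∀ z ∈ C, z ∉ square n := fun z hz => (hCPQ z hz).elim (hPavoid z) (hQavoid z)
  have hwind : winding (C ++ C.take 1) < 0 := by
    rw [hloop, winding_append_reverse_tail hQc hQavoid (hPl.trans hQl.symm)]
    linarith
  refine ⟨C, isStarCircuit_of_isChain_append_take_one (by simp [C]) hchain,
    fun w hw => ⟨fun hwC => hCn w hwC hw, ?_⟩, hCPQ⟩
  rw [windingAround_eq_winding hchain hCn hw]
  exact hwind.ne

/-- Lemma 3: a clockwise and a counterclockwise `*`path from `x` to `y` in `Δᶜ` together
contain a `*`circuit around `Δ = {-n,…,n}²`. -/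
theorem statement6 (n : ℕ) (hn : 1 ≤ n) (x y : Site)
    (hx : x ∉ square n) (hy : y ∉ square n)
    (P : List Site) (hPc : P.Chain' adjStar) (hPh : P.head? = some x)
    (hPl : P.getLast? = some y) (hPavoid : ∀ z ∈ P, z ∉ square n)
    (hPw : winding P < 0)
    (Q : List Site) (hQc : Q.Chain' adjStar) (hQh : Q.head? = some x)
    (hQl : Q.getLast? = some y) (hQavoid : ∀ z ∈ Q, z ∉ square n)
    (hQw : 0 < winding Q) :
    ∃ C : List Site, IsStarCircuit C ∧ CircuitAround C (square n) ∧
      ∀ z ∈ C, z ∈ P ∨ z ∈ Q :=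
  statement6_general n x y P hPc hPh hPl hPavoid hPw Q hQc hQh hQl hQavoid hQw

end Percolation
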